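/- Let A be a set of gambles on X^N. Then: (i) A avoids non-positivity under exchangeability (no element of posi(({f ∈ G(X^N) : f > 0} ∪ A) + W_{A_N}) is pointwise ≤ 0) if and only if the image Hy^N(A) ⊆ G(N^N_X) avoids non-positivity (no element of posi(Hy^N(A)) is pointwise ≤ 0); and (ii) Hy^N(E_ex(A)) = E(Hy^N(A)), where E_ex(A) is the intersection of all coherent and exchangeable sets of gambles on X^N including A, and E(B) denotes the natural extension of B ⊆ G(N^N_X), the intersection of all coherent sets of gambles on N^N_X including B. -/

import Mathlib

variable {X : Type*} [Fintype X] [DecidableEq X] [Nonempty X]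

/-- `ex^N(f)`: the uniform average of all permuted versions `π^t f` of `f`,
where `(π^t f)(x) = f(x ∘ π)`. -/
noncomputable def exg {X : Type*} (N : ℕ) (f : (Fin N → X) → ℝ) : (Fin N → X) → ℝ :=
  fun x => (∑ π : Equiv.Perm (Fin N), f (x ∘ π)) / (N.factorial : ℝ)

/-- `W_{A_N}`: the linear span of the gambles `f - π^t f`, which is the kernel of
the projection operator `ex^N`. -/
def WA (X : Type*) (N : ℕ) : Set ((Fin N → X) → ℝ) := {f | exg N f = 0}

/-- A coherent set of desirable gambles on a set of possibilities `Y`. -/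
def Coherent {Y : Type*} (D : Set (Y → ℝ)) : Prop :=
  (0 : Y → ℝ) ∉ D ∧ (∀ f : Y → ℝ, 0 ≤ f → f ≠ 0 → f ∈ D) ∧
  (∀ f ∈ D, ∀ c : ℝ, 0 < c → c • f ∈ D) ∧ ∀ f ∈ D, ∀ g ∈ D, f + g ∈ D

/-- A set of desirable gambles on `X^N` is exchangeable if `W_{A_N} + D ⊆ D`. -/
def Exchangeable (X : Type*) (N : ℕ) (D : Set ((Fin N → X) → ℝ)) : Prop :=
  ∀ f ∈ WA X N, ∀ g ∈ D, f + g ∈ D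

/-- The counting map: `countVec x z` is the number of indices `k` with `x k = z`. -/
def countVec {X : Type*} [Fintype X] [DecidableEq X] {n : ℕ} (x : Fin n → X) : X → ℕ :=
  fun z => (Finset.univ.filter fun k => x k = z).card

lemma sum_countVec {X : Type*} [Fintype X] [DecidableEq X] {n : ℕ} (x : Fin n → X) :
    ∑ z, countVec x z = n := by
  classical
  have h := Finset.card_eq_sum_card_fiberwise
    (s := (Finset.univ : Finset (Fin n))) (t := (Finset.univ : Finset X))
    (f := x) (fun a _ => Finset.mem_univ _)
  simpa [countVec, Finset.card_fin] using h.symm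

/-- `N^N_X`: the set of count vectors, i.e. maps `m : X → ℕ` with `∑ m = N`. -/
abbrev CV (X : Type*) [Fintype X] (N : ℕ) := {m : X → ℕ // ∑ z, m z = N}

/-- The counting map `T^N : X^N → N^N_X`. -/
def Tmap {X : Type*} [Fintype X] [DecidableEq X] {N : ℕ} (x : Fin N → X) : CV X N :=
  ⟨countVec x, sum_countVec x⟩

/-- `Hy^N(f)`: the count gamble `m ↦ (1/|[m]|) ∑_{y ∈ [m]} f(y)`, where
`[m]` is the set of sequences with count vector `m`. -/
noncomputable def hy {X : Type*} [Fintype X] [DecidableEq X] {N : ℕ}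
    (f : (Fin N → X) → ℝ) : CV X N → ℝ :=
  fun m => (∑ y ∈ Finset.univ.filter (fun x : Fin N → X => Tmap x = m), f y) /
    ((Finset.univ.filter (fun x : Fin N → X => Tmap x = m)).card : ℝ)

/-- The positive hull of a set of gambles: all finite strictly positive linear combinations. -/
def posi {Y : Type*} (A : Set (Y → ℝ)) : Set (Y → ℝ) :=
  {g | ∃ n : ℕ, 0 < n ∧ ∃ (c : Fin n → ℝ) (f : Fin n → Y → ℝ),
    (∀ k, 0 < c k) ∧ (∀ k, f k ∈ A) ∧ g = ∑ k, c k • f k}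

open Pointwise

/-- `A` avoids non-positivity under exchangeability: no element of
`posi(({f > 0} ∪ A) + W_{A_N})` is pointwise `≤ 0`. -/
def ANPE (X : Type*) (N : ℕ) (A : Set ((Fin N → X) → ℝ)) : Prop :=
  ∀ g ∈ posi (({f : (Fin N → X) → ℝ | 0 ≤ f ∧ f ≠ 0} ∪ A) + WA X N), ¬ g ≤ 0

/-- The exchangeable natural extension of `A`: the intersection of all coherent and
exchangeable sets of desirable gambles including `A` (the whole space if there are none). -/
def exnatex (X : Type*) [Fintype X] [DecidableEq X] (N : ℕ)
    (A : Set ((Fin N → X) → ℝ)) : Set ((Fin N → X) → ℝ) :=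
  ⋂₀ {D | Coherent D ∧ Exchangeable X N D ∧ A ⊆ D}

/-!
Both sides are governed by the positive hull: the natural extension of `B` is
`posi ({f ≥ 0, f ≠ 0} ∪ B)` when `B` avoids non-positivity (and everything otherwise), and the
exchangeable natural extension of `A` is likewise `posi (({f ≥ 0, f ≠ 0} ∪ A) + W_{A_N})`.
The key identity is `ex^N f = Hy^N f ∘ T^N`: `ex^N f` is constant on each atom `[m]` and has the
same sum over it as `f`. Hence `W_{A_N}` is the kernel of the linear map `Hy^N`, which maps
positive gambles onto positive gambles, so `Hy^N` carries the generators of the exchangeable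
natural extension onto those of the natural extension of `Hy^N(A)`, hence hull onto hull.
-/

open Set

section PositiveHull

variable {Y : Type*}

def positiveGambles (Y : Type*) : Set (Y → ℝ) := {f | 0 ≤ f ∧ f ≠ 0}

lemma mem_positiveGambles {f : Y → ℝ} : f ∈ positiveGambles Y ↔ 0 < f := by
  rw [lt_iff_le_and_ne, ne_comm]
  rfl

def AvoidsNonpos (S : Set (Y → ℝ)) : Prop := ∀ g ∈ posi S, ¬ g ≤ 0

def naturalExtension (B : Set (Y → ℝ)) : Set (Y → ℝ) := ⋂₀ {D | Coherent D ∧ B ⊆ D}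

lemma subset_posi (S : Set (Y → ℝ)) : S ⊆ posi S := fun f hf =>
  ⟨1, one_pos, fun _ => 1, fun _ => f, fun _ => one_pos, fun _ => hf, by simp⟩

lemma posi_mono {S T : Set (Y → ℝ)} (h : S ⊆ T) : posi S ⊆ posi T := by
  rintro _ ⟨n, hn, c, f, hc, hf, rfl⟩
  exact ⟨n, hn, c, f, hc, fun k => h (hf k), rfl⟩

lemma smul_mem_posi {S : Set (Y → ℝ)} {c : ℝ} (hc : 0 < c) {g : Y → ℝ} (hg : g ∈ posi S) :
    c • g ∈ posi S := by
  obtain ⟨n, hn, d, f, hd, hf, rfl⟩ := hg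
  refine ⟨n, hn, fun k => c * d k, f, fun k => mul_pos hc (hd k), hf, ?_⟩
  simp only [Finset.smul_sum, smul_smul]

lemma add_mem_posi {S : Set (Y → ℝ)} {g h : Y → ℝ} (hg : g ∈ posi S) (hh : h ∈ posi S) :
    g + h ∈ posi S := by
  obtain ⟨n, hn, c, f, hc, hf, rfl⟩ := hg
  obtain ⟨m, -, d, e, hd, he, rfl⟩ := hh
  refine ⟨n + m, by omega, Fin.append c d, Fin.append f e, fun k => ?_, fun k => ?_, ?_⟩
  · cases k using Fin.addCases <;> simp [hc, hd]
  · cases k using Fin.addCases <;> simp [hf, he]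
  · rw [Fin.sum_univ_add]
    simp only [Fin.append_left, Fin.append_right]

lemma posi_subset_of_closed {S D : Set (Y → ℝ)}
    (hsmul : ∀ f ∈ D, ∀ c : ℝ, 0 < c → c • f ∈ D) (hadd : ∀ f ∈ D, ∀ g ∈ D, f + g ∈ D)
    (hS : S ⊆ D) : posi S ⊆ D := by
  rintro _ ⟨n, hn, c, f, hc, hf, rfl⟩
  have : Nonempty (Fin n) := ⟨⟨0, hn⟩⟩
  exact Finset.sum_induction_nonempty _ (· ∈ D) (fun f g hf hg => hadd f hf g hg)
    Finset.univ_nonempty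
    fun k _ => hsmul _ (hS (hf k)) _ (hc k)

lemma LinearMap.image_posi {Z : Type*} (L : (Y → ℝ) →ₗ[ℝ] (Z → ℝ)) (S : Set (Y → ℝ)) :
    L '' posi S = posi (L '' S) := by
  ext g
  constructor
  · rintro ⟨_, ⟨n, hn, c, f, hc, hf, rfl⟩, rfl⟩
    exact ⟨n, hn, c, fun k => L (f k), hc, fun k => ⟨f k, hf k, rfl⟩, by simp⟩
  · rintro ⟨n, hn, c, v, hc, hv, rfl⟩
    choose f hf hfv using hv
    exact ⟨∑ k, c k • f k, ⟨n, hn, c, f, hc, hf, rfl⟩, by simp [hfv]⟩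

lemma add_mem_posi_add_submodule (W : Submodule ℝ (Y → ℝ)) (T : Set (Y → ℝ)) {w g : Y → ℝ}
    (hw : w ∈ W) (hg : g ∈ posi (T + (W : Set (Y → ℝ)))) :
    w + g ∈ posi (T + (W : Set (Y → ℝ))) := by
  suffices posi (T + (W : Set (Y → ℝ))) ⊆
      {g | ∀ w ∈ W, w + g ∈ posi (T + (W : Set (Y → ℝ)))} from this hg w hw
  refine posi_subset_of_closed ?_ ?_ ?_
  · intro g hg c hc w hw
    have := smul_mem_posi hc (hg (c⁻¹ • w) (W.smul_mem _ hw))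
    rwa [smul_add, smul_inv_smul₀ hc.ne'] at this
  · intro f hf g hg w hw
    simpa [add_assoc] using add_mem_posi (hf w hw) (by simpa using hg 0 W.zero_mem)
  · rintro _ ⟨t, ht, w', hw', rfl⟩ w hw
    exact subset_posi _ ⟨t, ht, w + w', W.add_mem hw hw', add_left_comm t w w'⟩

lemma posi_positiveGambles_union_subset (B : Set (Y → ℝ)) :
    posi (positiveGambles Y ∪ B) ⊆ positiveGambles Y ∪ {g | ∃ b ∈ posi B, b ≤ g} := by
  refine posi_subset_of_closed ?_ ?_ ?_
  · rintro f (⟨hf, hne⟩ | ⟨b, hb, hbf⟩) c hc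
    · exact Or.inl ⟨smul_nonneg hc.le hf, smul_ne_zero hc.ne' hne⟩
    · exact Or.inr ⟨c • b, smul_mem_posi hc hb, smul_le_smul_of_nonneg_left hbf hc.le⟩
  · rintro f (⟨hf, hne⟩ | ⟨b, hb, hbf⟩) g (⟨hg, -⟩ | ⟨b', hb', hbg⟩)
    · refine Or.inl ⟨add_nonneg hf hg, fun hfg => hne (le_antisymm ?_ hf)⟩
      simpa [hfg] using le_add_of_nonneg_right (a := f) hg
    · exact Or.inr ⟨b', hb', hbg.trans (le_add_of_nonneg_left hf)⟩
    · exact Or.inr ⟨b, hb, hbf.trans (le_add_of_nonneg_right hg)⟩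
    · exact Or.inr ⟨b + b', add_mem_posi hb hb', add_le_add hbf hbg⟩
  · rintro f (hf | hf)
    · exact Or.inl hf
    · exact Or.inr ⟨f, subset_posi B hf, le_rfl⟩

lemma AvoidsNonpos.positiveGambles_union {B : Set (Y → ℝ)} (hB : AvoidsNonpos B) :
    AvoidsNonpos (positiveGambles Y ∪ B) := by
  intro g hg hle
  rcases posi_positiveGambles_union_subset B hg with ⟨hg0, hne⟩ | ⟨b, hb, hbg⟩
  · exact hne (le_antisymm hle hg0)
  · exact hB b hb (hbg.trans hle)

lemma AvoidsNonpos.of_image {Z : Type*} (L : (Y → ℝ) →ₗ[ℝ] (Z → ℝ))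
    (hL : ∀ g, g ≤ 0 → L g ≤ 0) {S : Set (Y → ℝ)} (h : AvoidsNonpos (L '' S)) :
    AvoidsNonpos S := fun g hg hle =>
  h (L g) (L.image_posi S ▸ mem_image_of_mem L hg) (hL g hle)

lemma Coherent.posi_subset {D S : Set (Y → ℝ)} (hD : Coherent D) (hS : S ⊆ D) : posi S ⊆ D :=
  posi_subset_of_closed hD.2.2.1 hD.2.2.2 hS

lemma Coherent.not_le_zero {D : Set (Y → ℝ)} (hD : Coherent D) {g : Y → ℝ} (hg : g ∈ D) :
    ¬ g ≤ 0 := by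
  intro hle
  by_cases h0 : g = 0
  · exact hD.1 (h0 ▸ hg)
  · have hneg : -g ∈ D := hD.2.1 (-g) (neg_nonneg.2 hle) (neg_ne_zero.2 h0)
    exact hD.1 (by simpa using hD.2.2.2 g hg (-g) hneg)

lemma Coherent.avoidsNonpos {D S : Set (Y → ℝ)} (hD : Coherent D) (hS : S ⊆ D) :
    AvoidsNonpos S := fun _ hg => hD.not_le_zero (hD.posi_subset hS hg)

lemma coherent_posi {S : Set (Y → ℝ)} (hP : positiveGambles Y ⊆ S) (hS : AvoidsNonpos S) :
    Coherent (posi S) :=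
  ⟨fun h0 => hS 0 h0 le_rfl, fun _ hf hne => subset_posi S (hP ⟨hf, hne⟩),
    fun _ hf _ hc => smul_mem_posi hc hf, fun _ hf _ hg => add_mem_posi hf hg⟩

lemma naturalExtension_eq_posi {B : Set (Y → ℝ)} (hB : AvoidsNonpos B) :
    naturalExtension B = posi (positiveGambles Y ∪ B) := by
  refine IsGLB.sInf_eq (IsLeast.isGLB ⟨⟨?_, ?_⟩, ?_⟩)
  · exact coherent_posi subset_union_left hB.positiveGambles_union
  · exact subset_union_right.trans (subset_posi _)
  · exact fun _ ⟨hD, hBD⟩ => hD.posi_subset (union_subset (fun f hf => hD.2.1 f hf.1 hf.2) hBD)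

lemma naturalExtension_eq_univ {B : Set (Y → ℝ)} (hB : ¬ AvoidsNonpos B) :
    naturalExtension B = univ :=
  sInter_eq_univ.2 fun _ ⟨hD, hBD⟩ => (hB (hD.avoidsNonpos hBD)).elim

end PositiveHull

section Counting

variable {X : Type*} {N : ℕ}

lemma exg_comp_perm (f : (Fin N → X) → ℝ) (x : Fin N → X) (σ : Equiv.Perm (Fin N)) :
    exg N f (x ∘ σ) = exg N f x := by
  simp only [exg]
  congr 1
  exact Fintype.sum_equiv (Equiv.mulLeft σ) _ _ fun _ => rfl

variable [Fintype X] [DecidableEq X]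

def atom (m : CV X N) : Finset (Fin N → X) := Finset.univ.filter fun x => Tmap x = m

lemma mem_atom {x : Fin N → X} {m : CV X N} : x ∈ atom m ↔ Tmap x = m := by
  simp [atom]

lemma hy_apply (f : (Fin N → X) → ℝ) (m : CV X N) :
    hy f m = (∑ y ∈ atom m, f y) / (atom m).card := rfl

lemma Tmap_comp_perm (x : Fin N → X) (π : Equiv.Perm (Fin N)) : Tmap (x ∘ π) = Tmap x :=
  Subtype.ext <| funext fun z => by
    change countVec (x ∘ π) z = countVec x z
    exact Finset.card_equiv π (by simp)

lemma exists_perm_comp_eq {x y : Fin N → X} (h : Tmap x = Tmap y) :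
    ∃ π : Equiv.Perm (Fin N), x ∘ π = y := by
  have hcard : ∀ z, Fintype.card {k // y k = z} = Fintype.card {k // x k = z} := fun z => by
    simp only [Fintype.card_subtype]
    exact congrFun (congrArg Subtype.val h.symm) z
  exact ⟨Equiv.ofFiberEquiv fun z => Fintype.equivOfCardEq (hcard z),
    funext fun k => Equiv.ofFiberEquiv_map _ k⟩

lemma Tmap_surjective : Function.Surjective (Tmap : (Fin N → X) → CV X N) := by
  rintro ⟨m, hm⟩
  let e : (Σ z, Fin (m z)) ≃ Fin N := Fintype.equivFinOfCardEq (by simp [hm])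
  refine ⟨fun k => (e.symm k).1, Subtype.ext (funext fun z => ?_)⟩
  calc countVec (fun k => (e.symm k).1) z = Fintype.card {k // (e.symm k).1 = z} :=
        (Fintype.card_subtype _).symm
    _ = Fintype.card {s : Σ z, Fin (m z) // s.1 = z} :=
        Fintype.card_congr (e.symm.subtypeEquiv fun _ => Iff.rfl)
    _ = m z := by rw [Fintype.card_congr (Equiv.sigmaSubtype z), Fintype.card_fin]

lemma atom_card_ne_zero (m : CV X N) : ((atom m).card : ℝ) ≠ 0 := by
  obtain ⟨x, rfl⟩ := Tmap_surjective m
  exact Nat.cast_ne_zero.2 (Finset.card_ne_zero.2 ⟨x, mem_atom.2 rfl⟩)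

lemma hy_comp_Tmap (h : CV X N → ℝ) : hy (h ∘ Tmap) = h := by
  ext m
  rw [hy_apply, Finset.sum_eq_card_nsmul (f := h ∘ Tmap) fun y hy => congrArg h (mem_atom.1 hy),
    nsmul_eq_mul, mul_div_cancel_left₀ _ (atom_card_ne_zero m)]

lemma hy_surjective : Function.Surjective (hy : ((Fin N → X) → ℝ) → CV X N → ℝ) :=
  fun h => ⟨h ∘ Tmap, hy_comp_Tmap h⟩

lemma sum_atom_comp_perm (f : (Fin N → X) → ℝ) (m : CV X N) (π : Equiv.Perm (Fin N)) :
    ∑ y ∈ atom m, f (y ∘ π) = ∑ y ∈ atom m, f y :=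
  Finset.sum_nbij' (· ∘ π) (· ∘ π.symm)
    (fun y hy => by simpa [mem_atom, Tmap_comp_perm] using hy)
    (fun y hy => by simpa [mem_atom, Tmap_comp_perm] using hy)
    (fun y _ => by simp [Function.comp_assoc]) (fun y _ => by simp [Function.comp_assoc])
    fun _ _ => rfl

lemma exg_eq_hy_comp_Tmap (f : (Fin N → X) → ℝ) : exg N f = hy f ∘ Tmap := by
  ext x
  have hconst : ∀ y ∈ atom (Tmap x), exg N f y = exg N f x := fun y hy => by
    obtain ⟨σ, rfl⟩ := exists_perm_comp_eq (mem_atom.1 hy).symm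
    exact exg_comp_perm f x σ
  have hsum : ∑ y ∈ atom (Tmap x), exg N f y = ∑ y ∈ atom (Tmap x), f y := by
    simp only [exg, ← Finset.sum_div]
    rw [Finset.sum_comm, Finset.sum_congr rfl fun π _ => sum_atom_comp_perm f _ π,
      Finset.sum_const, Finset.card_univ, Fintype.card_perm, Fintype.card_fin, nsmul_eq_mul,
      mul_div_cancel_left₀ _ (Nat.cast_ne_zero.2 N.factorial_ne_zero)]
  rw [Finset.sum_congr rfl hconst, Finset.sum_const, nsmul_eq_mul] at hsum
  rw [Function.comp_apply, hy_apply, ← hsum, mul_div_cancel_left₀ _ (atom_card_ne_zero _)]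

end Counting

section Representation

variable {X : Type*} {N : ℕ} (A : Set ((Fin N → X) → ℝ))

-- `ANPE X N A` unfolds to `AvoidsNonpos (exchGenerators A)`.
def exchGenerators : Set ((Fin N → X) → ℝ) := (positiveGambles (Fin N → X) ∪ A) + WA X N

lemma exchGenerators_subset {D : Set ((Fin N → X) → ℝ)} (hD : Coherent D)
    (hE : Exchangeable X N D) (hAD : A ⊆ D) : exchGenerators A ⊆ D := by
  rintro _ ⟨f, hf, w, hw, rfl⟩
  change f + w ∈ D
  rw [add_comm]
  exact hE w hw f (hf.elim (fun hf => hD.2.1 f hf.1 hf.2) (hAD ·))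

variable [Fintype X] [DecidableEq X]

noncomputable def hyLinear : ((Fin N → X) → ℝ) →ₗ[ℝ] (CV X N → ℝ) where
  toFun := hy
  map_add' f g := by
    ext m
    simp only [hy_apply, Pi.add_apply, Finset.sum_add_distrib, add_div]
  map_smul' c f := by
    ext m
    simp only [hy_apply, Pi.smul_apply, smul_eq_mul, ← Finset.mul_sum, mul_div_assoc,
      RingHom.id_apply]

lemma coe_hyLinear : ⇑(hyLinear : ((Fin N → X) → ℝ) →ₗ[ℝ] (CV X N → ℝ)) = hy := rfl

lemma image_hy_posi (S : Set ((Fin N → X) → ℝ)) : hy '' posi S = posi (hy '' S) :=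
  hyLinear.image_posi S

lemma WA_eq_ker_hyLinear : WA X N = LinearMap.ker (hyLinear : _ →ₗ[ℝ] (CV X N → ℝ)) := by
  ext f
  change exg N f = 0 ↔ hy f = 0
  rw [exg_eq_hy_comp_Tmap]
  exact Tmap_surjective.injective_comp_right.eq_iff' rfl

lemma hy_nonpos {f : (Fin N → X) → ℝ} (hf : f ≤ 0) : hy f ≤ 0 := fun _ =>
  div_nonpos_of_nonpos_of_nonneg (Finset.sum_nonpos fun y _ => hf y) (Nat.cast_nonneg _)

lemma hy_pos {f : (Fin N → X) → ℝ} (hf : 0 < f) : 0 < hy f := by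
  obtain ⟨hf0, x, hx⟩ := Pi.lt_def.1 hf
  refine Pi.lt_def.2
    ⟨fun _ => div_nonneg (Finset.sum_nonneg fun y _ => hf0 y) (Nat.cast_nonneg _), Tmap x,
      div_pos (Finset.sum_pos' (fun y _ => hf0 y) ⟨x, mem_atom.2 rfl, hx⟩) ?_⟩
  exact Nat.cast_pos.2 (Finset.card_pos.2 ⟨x, mem_atom.2 rfl⟩)

lemma image_hy_positiveGambles :
    hy '' positiveGambles (Fin N → X) = positiveGambles (CV X N) := by
  ext h
  simp only [mem_image, mem_positiveGambles]
  refine ⟨fun ⟨f, hf, hfh⟩ => hfh ▸ hy_pos hf, fun hh => ⟨h ∘ Tmap, ?_, hy_comp_Tmap h⟩⟩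
  obtain ⟨hh0, m, hm⟩ := Pi.lt_def.1 hh
  obtain ⟨x, rfl⟩ := Tmap_surjective m
  exact Pi.lt_def.2 ⟨fun y => hh0 (Tmap y), x, hm⟩

lemma union_subset_exchGenerators : positiveGambles (Fin N → X) ∪ A ⊆ exchGenerators A :=
  fun f hf => ⟨f, hf, 0, by simp [WA_eq_ker_hyLinear], add_zero f⟩

lemma image_hy_exchGenerators :
    hy '' exchGenerators A = positiveGambles (CV X N) ∪ hy '' A := by
  rw [← image_hy_positiveGambles, ← image_union]
  ext h
  constructor
  · rintro ⟨_, ⟨f, hf, w, hw, rfl⟩, rfl⟩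
    rw [WA_eq_ker_hyLinear] at hw
    exact ⟨f, hf, by simpa [← coe_hyLinear] using hw⟩
  · rintro ⟨f, hf, rfl⟩
    exact ⟨f, union_subset_exchGenerators A hf, rfl⟩

lemma exchangeable_posi_exchGenerators : Exchangeable X N (posi (exchGenerators A)) := by
  intro w hw g hg
  rw [exchGenerators, WA_eq_ker_hyLinear] at *
  exact add_mem_posi_add_submodule _ _ hw hg

lemma exnatex_eq_posi (hA : ANPE X N A) : exnatex X N A = posi (exchGenerators A) := by
  refine IsGLB.sInf_eq (IsLeast.isGLB ⟨⟨?_, exchangeable_posi_exchGenerators A, ?_⟩, ?_⟩)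
  · exact coherent_posi (subset_union_left.trans (union_subset_exchGenerators A)) hA
  · exact subset_union_right.trans ((union_subset_exchGenerators A).trans (subset_posi _))
  · exact fun D ⟨hD, hE, hAD⟩ => hD.posi_subset (exchGenerators_subset A hD hE hAD)

lemma exnatex_eq_univ (hA : ¬ ANPE X N A) : exnatex X N A = univ :=
  sInter_eq_univ.2 fun _ ⟨hD, hE, hAD⟩ =>
    (hA (hD.avoidsNonpos (exchGenerators_subset A hD hE hAD))).elim

lemma anpe_iff_avoidsNonpos_image_hy : ANPE X N A ↔ AvoidsNonpos (hy '' A) := by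
  constructor
  · intro hA g hg hle
    obtain ⟨f, hf, rfl⟩ : g ∈ hy '' posi A := by rwa [image_hy_posi]
    have hsub : exg N f - f ∈ WA X N := by
      rw [WA_eq_ker_hyLinear, SetLike.mem_coe, LinearMap.mem_ker, map_sub, coe_hyLinear,
        exg_eq_hy_comp_Tmap, hy_comp_Tmap, sub_self]
    have hmem : exg N f ∈ posi (exchGenerators A) := by
      simpa using exchangeable_posi_exchGenerators A _ hsub f
        (posi_mono (subset_union_right.trans (union_subset_exchGenerators A)) hf)
    exact hA _ hmem (exg_eq_hy_comp_Tmap f ▸ fun x => hle (Tmap x))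
  · intro h
    refine AvoidsNonpos.of_image (S := exchGenerators A) hyLinear (fun _ => hy_nonpos) ?_
    rw [coe_hyLinear, image_hy_exchGenerators]
    exact h.positiveGambles_union

lemma image_hy_exnatex : hy '' exnatex X N A = naturalExtension (hy '' A) := by
  by_cases hA : ANPE X N A
  · rw [exnatex_eq_posi A hA, naturalExtension_eq_posi ((anpe_iff_avoidsNonpos_image_hy A).1 hA),
      image_hy_posi, image_hy_exchGenerators]
  · rw [exnatex_eq_univ A hA,
      naturalExtension_eq_univ (mt (anpe_iff_avoidsNonpos_image_hy A).2 hA),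
      image_univ_of_surjective hy_surjective]

end Representation

theorem exchangeable_natural_extension_and_representation_general {N : ℕ}
    (A : Set ((Fin N → X) → ℝ)) :
    (ANPE X N A ↔ ∀ g ∈ posi (hy '' A), ¬ g ≤ 0) ∧
    hy '' exnatex X N A =
      ⋂₀ {Dc : Set (CV X N → ℝ) | Coherent Dc ∧ hy '' A ⊆ Dc} :=
  ⟨anpe_iff_avoidsNonpos_image_hy A, image_hy_exnatex A⟩

theorem exchangeable_natural_extension_and_representation {N : ℕ} (hN : 1 ≤ N)
    (A : Set ((Fin N → X) → ℝ)) :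
    (ANPE X N A ↔ ∀ g ∈ posi (hy '' A), ¬ g ≤ 0) ∧
    hy '' exnatex X N A =
      ⋂₀ {Dc : Set (CV X N → ℝ) | Coherent Dc ∧ hy '' A ⊆ Dc} :=
  exchangeable_natural_extension_and_representation_general A
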